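/- Let φ : ℝⁿ × [0,∞) → ℝⁿ satisfy the semigroup (flow) property φ(x, s+t) = φ(φ(x,s), t) for all x ∈ ℝⁿ and all s, t ≥ 0, let α : [0,∞) → [0,∞) be continuous, fix x ∈ ℝⁿ, and suppose t ↦ α(‖φ(x,t)‖) is continuous and integrable on [0,∞). Define V(y) = ∫₀^∞ α(‖φ(y,t)‖) dt. Then the function s ↦ V(φ(x,s)) is differentiable on (0,∞) with derivative equal to −α(‖φ(x,s)‖); in particular its derivative is ≤ 0. -/

import Mathlib

/-!
By the flow property, `V(φ(x,s)) = ∫_s^∞ α(‖φ(x,t)‖) dt` for `s ≥ 0`: the value of `V` along the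
trajectory is the tail of a convergent integral. Near `s > 0` this tail equals
`∫_0^∞ - ∫_0^s`, so the fundamental theorem of calculus gives the derivative `-α(‖φ(x,s)‖)`.
-/

open MeasureTheory Set Filter Topology

section TailIntegral

variable {E : Type*} [NormedAddCommGroup E] [NormedSpace ℝ E]

theorem setIntegral_Ici_comp_const_add (g : ℝ → E) (a s : ℝ) :
    ∫ t in Ici a, g (s + t) = ∫ t in Ici (s + a), g t := by
  simpa [preimage_const_add_Ici] using (measurePreserving_add_left volume s).setIntegral_preimage_emb
    (measurableEmbedding_addLeft s) g (Ici (s + a))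

theorem hasDerivAt_setIntegral_Ici [CompleteSpace E] {g : ℝ → E} {a s : ℝ}
    (hg : IntegrableOn g (Ici a)) (has : a < s) (hmeas : StronglyMeasurableAtFilter g (𝓝 s))
    (hcont : ContinuousAt g s) :
    HasDerivAt (fun s' => ∫ t in Ici s', g t) (-g s) s := by
  have hprim : HasDerivAt (fun s' => ∫ t in a..s', g t) (g s) s :=
    intervalIntegral.integral_hasDerivAt_right
      (hg.mono_set (by simp [uIcc_of_le has.le, Icc_subset_Ici_self])).intervalIntegrable
      hmeas hcont
  have hsplit : (fun s' => ∫ t in Ici s', g t)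
      =ᶠ[𝓝 s] fun s' => (∫ t in Ici a, g t) - ∫ t in a..s', g t := by
    filter_upwards [eventually_gt_nhds has] with s' hs'
    rw [← intervalIntegral.integral_Ici_sub_Ici' hg (hg.mono_set (Ici_subset_Ici.2 hs'.le)),
      sub_sub_cancel]
  exact (hprim.const_sub _).congr_of_eventuallyEq hsplit

end TailIntegral

theorem converse_lyapunov_hasDerivAt_general {n : ℕ}
    (φ : (Fin n → ℝ) → ℝ → (Fin n → ℝ))
    (hflow : ∀ (x : Fin n → ℝ) (s t : ℝ), 0 ≤ s → 0 ≤ t → φ x (s + t) = φ (φ x s) t)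
    (α : ℝ → ℝ)
    (hα_nonneg : ∀ z, 0 ≤ z → 0 ≤ α z)
    (x : Fin n → ℝ)
    (hcont : ContinuousOn (fun t => α ‖φ x t‖) (Set.Ici 0))
    (hint : IntegrableOn (fun t => α ‖φ x t‖) (Set.Ici 0)) :
    ∀ s : ℝ, 0 < s →
      HasDerivAt (fun s' => ∫ t in Set.Ici (0 : ℝ), α ‖φ (φ x s') t‖) (-(α ‖φ x s‖)) s ∧
        -(α ‖φ x s‖) ≤ 0 := by
  intro s hs
  have hnhds : Ici (0 : ℝ) ∈ 𝓝 s := Ici_mem_nhds hs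
  have htail : HasDerivAt (fun s' => ∫ t in Ici s', α ‖φ x t‖) (-(α ‖φ x s‖)) s :=
    hasDerivAt_setIntegral_Ici hint hs ⟨_, hnhds, hcont.aestronglyMeasurable measurableSet_Ici⟩
      (hcont.continuousAt hnhds)
  have hV_eq_tail : (fun s' => ∫ t in Ici (0 : ℝ), α ‖φ (φ x s') t‖)
      =ᶠ[𝓝 s] fun s' => ∫ t in Ici s', α ‖φ x t‖ := by
    filter_upwards [hnhds] with s' hs'
    calc ∫ t in Ici (0 : ℝ), α ‖φ (φ x s') t‖
        = ∫ t in Ici (0 : ℝ), α ‖φ x (s' + t)‖ :=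
          setIntegral_congr_fun measurableSet_Ici fun t ht => by rw [hflow x s' t hs' ht]
      _ = ∫ t in Ici s', α ‖φ x t‖ := by
          rw [setIntegral_Ici_comp_const_add (fun t => α ‖φ x t‖), add_zero]
  exact ⟨htail.congr_of_eventuallyEq hV_eq_tail, neg_nonpos.2 (hα_nonneg _ (norm_nonneg _))⟩

/-- Differentiability of the converse Lyapunov function along trajectories: with the flow
property and `V(y) = ∫₀^∞ α(‖φ(y,t)‖) dt`, the map `s ↦ V(φ(x,s))` is differentiable on
`(0,∞)` with derivative `−α(‖φ(x,s)‖) ≤ 0`. -/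
theorem converse_lyapunov_hasDerivAt {n : ℕ}
    (φ : (Fin n → ℝ) → ℝ → (Fin n → ℝ))
    (hflow : ∀ (x : Fin n → ℝ) (s t : ℝ), 0 ≤ s → 0 ≤ t → φ x (s + t) = φ (φ x s) t)
    (α : ℝ → ℝ)
    (hα_cont : ContinuousOn α (Set.Ici 0))
    (hα_nonneg : ∀ z, 0 ≤ z → 0 ≤ α z)
    (x : Fin n → ℝ)
    (hcont : ContinuousOn (fun t => α ‖φ x t‖) (Set.Ici 0))
    (hint : IntegrableOn (fun t => α ‖φ x t‖) (Set.Ici 0)) :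
    ∀ s : ℝ, 0 < s →
      HasDerivAt (fun s' => ∫ t in Set.Ici (0 : ℝ), α ‖φ (φ x s') t‖) (-(α ‖φ x s‖)) s ∧
        -(α ‖φ x s‖) ≤ 0 :=
  converse_lyapunov_hasDerivAt_general φ hflow α hα_nonneg x hcont hint
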